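/- arXiv:1301.1309 — 6 statements merged into one kernel-verified Lean document; each statement's English description precedes it below -/
import Mathlib

section
/- Let E and F be finite-dimensional real normed vector spaces, let f : E → F be a C^∞ map, let r ≥ 1, and let γ₁, γ₂ : ℝ → E be C^∞ curves with γ₁(0) = γ₂(0) = x₀ and iteratedDeriv j γ₁ 0 = iteratedDeriv j γ₂ 0 for every j with 1 ≤ j ≤ r − 1. Then iteratedDeriv r (f ∘ γ₁) 0 − iteratedDeriv r (f ∘ γ₂) 0 = (fderiv ℝ f x₀) (iteratedDeriv r γ₁ 0 − iteratedDeriv r γ₂ 0). In other words, the top-order derivative of f ∘ γ at 0 depends affinely on the top-order derivative of γ at 0, with linear part the differential of f at x₀. -/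
open OrderedFinpartition Function

/-- The ordered finpartition of `Fin r` with a single block. -/
def OrderedFinpartition.single (r : ℕ) (hr : 0 < r) : OrderedFinpartition r where
  length := 1
  partSize _ := r
  partSize_pos _ := hr
  emb _ := id
  emb_strictMono _ := strictMono_id
  parts_strictMono := Subsingleton.strictMono _
  disjoint := by
    intro m _ m' _ h
    exact absurd (Subsingleton.elim m m') h
  cover x := ⟨0, x, rfl⟩

lemma OrderedFinpartition.sum_partSize {r : ℕ} (c : OrderedFinpartition r) :
    ∑ m, c.partSize m = r := by
  have := c.sum_sigma_eq_sum (fun _ ↦ (1 : ℕ))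
  simpa using this

lemma OrderedFinpartition.eq_single {r : ℕ} (hr : 0 < r) (c : OrderedFinpartition r)
    (hc : c.length = 1) : c = OrderedFinpartition.single r hr := by
  obtain ⟨L, ps, pos, e, emono, pmono, dis, cov⟩ := c
  subst hc
  have hsum : ∑ m, ps m = r :=
    OrderedFinpartition.sum_partSize ⟨1, ps, pos, e, emono, pmono, dis, cov⟩
  have hps : ps = fun _ ↦ r := by
    funext m
    have hm : m = 0 := Subsingleton.elim _ _
    subst hm
    simpa using hsum
  subst hps
  have he : e = fun _ ↦ id := by
    funext m
    have hm : m = 0 := Subsingleton.elim _ _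
    subst hm
    refine ((emono 0).range_inj strictMono_id).mp ?_
    have hsurj : Function.Surjective (e 0) :=
      Finite.surjective_of_injective (emono 0).injective
    rw [Set.range_id, hsurj.range_eq]
  subst he
  rfl

lemma OrderedFinpartition.partSize_le_of_ne_single {r : ℕ} (hr : 0 < r)
    (c : OrderedFinpartition r) (hc : c ≠ OrderedFinpartition.single r hr)
    (m : Fin c.length) : c.partSize m ≤ r - 1 := by
  have hlen : c.length ≠ 1 := fun h ↦ hc (c.eq_single hr h)
  have h1 : 0 < c.length := c.length_pos hr
  have h2 : 2 ≤ c.length := by omega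
  set m' : Fin c.length := if (m : ℕ) = 0 then ⟨1, by omega⟩ else ⟨0, by omega⟩ with hm'
  have hne : m ≠ m' := by
    rcases eq_or_ne (m : ℕ) 0 with h | h <;>
      simp [hm', h, Fin.ext_iff] at * <;> omega
  have hle : c.partSize m + c.partSize m' ≤ r := by
    have := Finset.sum_le_sum_of_subset (Finset.subset_univ ({m, m'} : Finset (Fin c.length)))
      (f := c.partSize)
    rwa [Finset.sum_pair hne, c.sum_partSize] at this
  have := c.partSize_pos m'
  omega


/-- If two smooth curves agree at `0` and have equal iterated derivatives at `0`
up to order `r - 1`, then the top-order (order `r`) derivatives of their images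
under a smooth map `f` differ by the image under the differential of `f` at the
common base point of the difference of the top-order derivatives of the curves.
(The top-order derivative of `f ∘ γ` depends affinely on the top-order
derivative of `γ`, with linear part `fderiv ℝ f x₀`.) -/
theorem iteratedDeriv_comp_top_order_affine
    {E F : Type*} [NormedAddCommGroup E] [NormedSpace ℝ E] [FiniteDimensional ℝ E]
    [NormedAddCommGroup F] [NormedSpace ℝ F] [FiniteDimensional ℝ F]
    (f : E → F) (hf : ContDiff ℝ (⊤ : ℕ∞) f) (r : ℕ) (hr : 1 ≤ r)
    (γ₁ γ₂ : ℝ → E) (hγ₁ : ContDiff ℝ (⊤ : ℕ∞) γ₁) (hγ₂ : ContDiff ℝ (⊤ : ℕ∞) γ₂)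
    (x₀ : E) (h0₁ : γ₁ 0 = x₀) (h0₂ : γ₂ 0 = x₀)
    (hder : ∀ j, 1 ≤ j → j ≤ r - 1 → iteratedDeriv j γ₁ 0 = iteratedDeriv j γ₂ 0) :
    iteratedDeriv r (f ∘ γ₁) 0 - iteratedDeriv r (f ∘ γ₂) 0 =
      fderiv ℝ f x₀ (iteratedDeriv r γ₁ 0 - iteratedDeriv r γ₂ 0) := by
  classical
  have hr' : 0 < r := hr
  have hfT : HasFTaylorSeriesUpTo ((⊤ : ℕ∞) : WithTop ℕ∞) f (ftaylorSeries ℝ f) :=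
    contDiff_iff_ftaylorSeries (n := (⊤ : ℕ∞)).mp (hf.of_le (by simp))
  have key : ∀ γ : ℝ → E, ContDiff ℝ (⊤ : ℕ∞) γ →
      iteratedFDeriv ℝ r (f ∘ γ) 0 =
        ∑ c : OrderedFinpartition r,
          (ftaylorSeries ℝ f (γ 0)).compAlongOrderedFinpartition (ftaylorSeries ℝ γ 0) c := by
    intro γ hγ
    have hγT : HasFTaylorSeriesUpTo ((⊤ : ℕ∞) : WithTop ℕ∞) γ (ftaylorSeries ℝ γ) :=
      contDiff_iff_ftaylorSeries (n := (⊤ : ℕ∞)).mp (hγ.of_le (by simp))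
    have H : HasFTaylorSeriesUpTo ((⊤ : ℕ∞) : WithTop ℕ∞) (f ∘ γ)
        (fun x ↦ (ftaylorSeries ℝ f (γ x)).taylorComp (ftaylorSeries ℝ γ x)) := by
      rw [← hasFTaylorSeriesUpToOn_univ_iff]
      exact (hasFTaylorSeriesUpToOn_univ_iff.mpr hfT).comp
        (hasFTaylorSeriesUpToOn_univ_iff.mpr hγT) (Set.mapsTo_univ _ _)
    have := (H.eq_iteratedFDeriv (m := r) (by exact_mod_cast le_top) 0).symm
    exact this
  have e1 : iteratedDeriv r (f ∘ γ₁) 0 =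
      ∑ c : OrderedFinpartition r,
        ((ftaylorSeries ℝ f x₀).compAlongOrderedFinpartition (ftaylorSeries ℝ γ₁ 0) c)
          (fun _ ↦ (1 : ℝ)) := by
    rw [iteratedDeriv_eq_iteratedFDeriv, key γ₁ hγ₁, h0₁,
      ContinuousMultilinearMap.sum_apply]
  have e2 : iteratedDeriv r (f ∘ γ₂) 0 =
      ∑ c : OrderedFinpartition r,
        ((ftaylorSeries ℝ f x₀).compAlongOrderedFinpartition (ftaylorSeries ℝ γ₂ 0) c)
          (fun _ ↦ (1 : ℝ)) := by
    rw [iteratedDeriv_eq_iteratedFDeriv, key γ₂ hγ₂, h0₂,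
      ContinuousMultilinearMap.sum_apply]
  rw [e1, e2, ← Finset.sum_sub_distrib]
  rw [Finset.sum_eq_single_of_mem (OrderedFinpartition.single r hr') (Finset.mem_univ _)]
  · -- the single-block term
    simp only [FormalMultilinearSeries.compAlongOrderedFinpartition_apply]
    have happ : ∀ γ : ℝ → E,
        (OrderedFinpartition.single r hr').applyOrderedFinpartition
          (fun m ↦ ftaylorSeries ℝ γ 0 ((OrderedFinpartition.single r hr').partSize m))
          (fun _ ↦ (1 : ℝ)) = fun _ ↦ iteratedDeriv r γ 0 := by
      intro γ
      funext m
      rw [OrderedFinpartition.applyOrderedFinpartition_apply]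
      rw [iteratedDeriv_eq_iteratedFDeriv]
      rfl
    rw [happ, happ]
    show (iteratedFDeriv ℝ 1 f x₀) (fun _ ↦ iteratedDeriv r γ₁ 0)
        - (iteratedFDeriv ℝ 1 f x₀) (fun _ ↦ iteratedDeriv r γ₂ 0) = _
    rw [iteratedFDeriv_one_apply, iteratedFDeriv_one_apply, ← map_sub]
  · -- all other terms cancel
    intro c _ hc
    simp only [FormalMultilinearSeries.compAlongOrderedFinpartition_apply]
    have : (c.applyOrderedFinpartition
          (fun m ↦ ftaylorSeries ℝ γ₁ 0 (c.partSize m)) (fun _ ↦ (1 : ℝ)))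
        = (c.applyOrderedFinpartition
          (fun m ↦ ftaylorSeries ℝ γ₂ 0 (c.partSize m)) (fun _ ↦ (1 : ℝ))) := by
      funext m
      rw [OrderedFinpartition.applyOrderedFinpartition_apply,
        OrderedFinpartition.applyOrderedFinpartition_apply]
      have h1 : 1 ≤ c.partSize m := c.partSize_pos m
      have h2 : c.partSize m ≤ r - 1 := c.partSize_le_of_ne_single hr' hc m
      have := hder (c.partSize m) h1 h2
      rw [iteratedDeriv_eq_iteratedFDeriv, iteratedDeriv_eq_iteratedFDeriv] at this
      show (iteratedFDeriv ℝ (c.partSize m) γ₁ 0) ((fun _ ↦ (1:ℝ)) ∘ c.emb m)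
          = (iteratedFDeriv ℝ (c.partSize m) γ₂ 0) ((fun _ ↦ (1:ℝ)) ∘ c.emb m)
      exact this
    rw [this, sub_self]
end

section
/- Let V be a finite-dimensional real vector space, r ≥ 1, and J : V →ₗ[ℝ] V a linear endomorphism such that J^{r+1} = 0 and ker(J^k) = range(J^{r+1−k}) for every k with 1 ≤ k ≤ r. Then finrank ℝ V = (r+1) · finrank ℝ (ker J), and more precisely finrank ℝ (range (J^k)) = (r+1−k) · finrank ℝ (ker J) for every k with 0 ≤ k ≤ r+1. -/
open Module LinearMap

/-- For an `r`-transverse structure `J` on a finite-dimensional real vector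
space `V` (i.e. `J ^ (r+1) = 0` and `ker (J ^ k) = range (J ^ (r+1-k))` for
`1 ≤ k ≤ r`), one has `dim V = (r+1) · dim (ker J)` and, more precisely,
`dim (range (J ^ k)) = (r+1-k) · dim (ker J)` for all `0 ≤ k ≤ r+1`. -/
theorem rank_of_r_transverse_structure
    {V : Type*} [AddCommGroup V] [Module ℝ V] [FiniteDimensional ℝ V]
    (r : ℕ) (hr : 1 ≤ r) (J : V →ₗ[ℝ] V)
    (hnil : J ^ (r + 1) = 0)
    (hker : ∀ k, 1 ≤ k → k ≤ r → LinearMap.ker (J ^ k) = LinearMap.range (J ^ (r + 1 - k))) :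
    finrank ℝ V = (r + 1) * finrank ℝ (LinearMap.ker J) ∧
      ∀ k, k ≤ r + 1 →
        finrank ℝ (LinearMap.range (J ^ k)) = (r + 1 - k) * finrank ℝ (LinearMap.ker J) := by
  have hd : LinearMap.ker J = LinearMap.range (J ^ r) := by
    simpa using hker 1 le_rfl hr
  -- key step: for k ≤ r, dim range(J^k) = dim range(J^{k+1}) + dim ker J
  have hstep : ∀ k, k ≤ r → finrank ℝ (LinearMap.range (J ^ k))
      = finrank ℝ (LinearMap.range (J ^ (k + 1))) + finrank ℝ (LinearMap.ker J) := by
    intro k hk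
    set p := LinearMap.range (J ^ k) with hp
    have hle : LinearMap.ker J ≤ p := by
      rw [hd]
      have hpow : J ^ r = (J ^ k) * (J ^ (r - k)) := by
        rw [← pow_add]; congr 1; omega
      rw [hpow]
      rintro x ⟨y, rfl⟩
      exact ⟨(J ^ (r - k)) y, rfl⟩
    have hrn := LinearMap.finrank_range_add_finrank_ker (J ∘ₗ p.subtype)
    have h1 : LinearMap.range (J ∘ₗ p.subtype) = LinearMap.range (J ^ (k + 1)) := by
      rw [LinearMap.range_comp, Submodule.range_subtype, pow_succ',
        Module.End.mul_eq_comp, LinearMap.range_comp]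
    have h2 : finrank ℝ (LinearMap.ker (J ∘ₗ p.subtype)) = finrank ℝ (LinearMap.ker J) := by
      rw [LinearMap.ker_comp]
      exact LinearEquiv.finrank_eq (Submodule.comapSubtypeEquivOfLe hle)
    rw [h1, h2] at hrn
    have h3 : finrank ℝ p = finrank ℝ (LinearMap.range (J ^ k)) := rfl
    omega
  have hdim : ∀ j, j ≤ r + 1 →
      finrank ℝ (LinearMap.range (J ^ (r + 1 - j))) = j * finrank ℝ (LinearMap.ker J) := by
    intro j
    induction j with
    | zero => intro _; simp [hnil]
    | succ n ih =>
      intro hn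
      have h := hstep (r - n) (by omega)
      have e1 : r - n + 1 = r + 1 - n := by omega
      rw [e1] at h
      have e2 : r + 1 - (n + 1) = r - n := by omega
      rw [e2, h, ih (by omega)]
      ring
  have hall : ∀ k, k ≤ r + 1 →
      finrank ℝ (LinearMap.range (J ^ k)) = (r + 1 - k) * finrank ℝ (LinearMap.ker J) := by
    intro k hk
    have := hdim (r + 1 - k) (by omega)
    have e : r + 1 - (r + 1 - k) = k := by omega
    rwa [e] at this
  refine ⟨?_, hall⟩
  have h0 := hall 0 (by omega)
  rw [pow_zero, Module.End.one_eq_id, LinearMap.range_id, finrank_top] at h0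
  simpa using h0
end

section
/- Let V be a finite-dimensional real vector space, r ≥ 1, and J : V →ₗ[ℝ] V a linear endomorphism such that J^{r+1} = 0 and ker(J^k) = range(J^{r+1−k}) for every k with 1 ≤ k ≤ r. Let H₀ be a subspace of V complementary to range J (i.e. IsCompl (range J) H₀). Then: (i) for each k with 0 ≤ k ≤ r the restriction of J^k to H₀ is injective, so H_k := J^k(H₀) is isomorphic to H₀; (ii) the subspaces H₀, H₁, …, H_r form an internal direct sum decomposition of V, i.e. V = H₀ ⊕ J(H₀) ⊕ ⋯ ⊕ J^r(H₀); and (iii) J^r(H₀) = ker J. -/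
open Module LinearMap

/-- For an `r`-transverse structure `J` on a finite-dimensional real vector
space `V` and a complement `H₀` of `range J`:
(i) each `J ^ k` (`0 ≤ k ≤ r`) is injective on `H₀`;
(ii) the subspaces `H₀, J(H₀), …, J^r(H₀)` form an internal direct sum
decomposition of `V`; and
(iii) `J^r(H₀) = ker J`. -/
theorem r_transverse_structure_horizontal_decomposition
    {V : Type*} [AddCommGroup V] [Module ℝ V] [FiniteDimensional ℝ V]
    (r : ℕ) (hr : 1 ≤ r) (J : V →ₗ[ℝ] V)
    (hnil : J ^ (r + 1) = 0)
    (hker : ∀ k, 1 ≤ k → k ≤ r → LinearMap.ker (J ^ k) = LinearMap.range (J ^ (r + 1 - k)))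
    (H₀ : Submodule ℝ V) (hH₀ : IsCompl (LinearMap.range J) H₀) :
    (∀ k, k ≤ r → ∀ x ∈ H₀, (J ^ k) x = 0 → x = 0) ∧
      DirectSum.IsInternal (fun k : Fin (r + 1) => H₀.map (J ^ (k : ℕ))) ∧
      H₀.map (J ^ r) = LinearMap.ker J := by
  -- High powers vanish
  have hpow0 : ∀ n, r + 1 ≤ n → (J ^ n : V →ₗ[ℝ] V) = 0 := by
    intro n hn
    have h : J ^ n = J ^ (n - (r + 1)) * J ^ (r + 1) := by
      rw [← pow_add]; congr 1; omega
    rw [h, hnil, mul_zero]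
  -- Part (i)
  have hinj : ∀ k, k ≤ r → ∀ x ∈ H₀, (J ^ k) x = 0 → x = 0 := by
    intro k hk x hx hJx
    rcases Nat.eq_zero_or_pos k with h0 | h1
    · subst h0; simpa using hJx
    · have hxker : x ∈ LinearMap.ker (J ^ k) := hJx
      rw [hker k h1 hk] at hxker
      have hrange : x ∈ LinearMap.range J := by
        obtain ⟨y, hy⟩ := hxker
        have hsplit : J ^ (r + 1 - k) = J * J ^ (r - k) := by
          rw [← pow_succ']; congr 1; omega
        exact ⟨(J ^ (r - k)) y, by rw [← hy, hsplit, Module.End.mul_apply]⟩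
      exact (Submodule.disjoint_def.mp hH₀.disjoint) x hrange hx
  -- Key lemma: a sum of elements of the `H₀.map (J ^ k)` vanishes iff all terms do
  have hzero : ∀ s : Fin (r + 1) → V, (∀ j : Fin (r + 1), s j ∈ H₀.map (J ^ (j : ℕ))) →
      (∑ j, s j) = 0 → ∀ j, s j = 0 := by
    intro s hs hsum
    choose h hmem hJh using hs
    have main : ∀ m : ℕ, ∀ j : Fin (r + 1), (j : ℕ) < m → s j = 0 := by
      intro m
      induction m with
      | zero => intro j hj; omega
      | succ m ih =>
        intro j hj
        rcases Nat.lt_or_ge (j : ℕ) m with h' | h'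
        · exact ih j h'
        have hjm : (j : ℕ) = m := by omega
        have hjr : (j : ℕ) < r + 1 := j.isLt
        have hmr : m ≤ r := by omega
        have h1 : ∑ i : Fin (r + 1), (J ^ (r - m)) (s i) = 0 := by
          rw [← map_sum, hsum, map_zero]
        have h2 : ∑ i : Fin (r + 1), (J ^ (r - m)) (s i) = (J ^ r) (h j) := by
          rw [Finset.sum_eq_single j]
          · rw [← hJh j, ← Module.End.mul_apply, ← pow_add]
            congr 2
            omega
          · intro i _ hij
            rcases Nat.lt_or_ge (i : ℕ) m with hi | hi
            · rw [ih i hi, map_zero]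
            · have hne : (i : ℕ) ≠ (j : ℕ) := fun hh => hij (Fin.ext hh)
              have him : m < (i : ℕ) := by omega
              rw [← hJh i, ← Module.End.mul_apply, ← pow_add,
                hpow0 (r - m + (i : ℕ)) (by omega), LinearMap.zero_apply]
          · intro hmem'; exact absurd (Finset.mem_univ j) hmem'
        have hhj : h j = 0 := hinj r le_rfl (h j) (hmem j) (h2.symm.trans h1)
        rw [← hJh j, hhj, map_zero]
    intro j
    exact main (r + 1) j j.isLt
  -- range of powers step
  have hsup_eq : LinearMap.range J ⊔ H₀ = ⊤ := codisjoint_iff.mp hH₀.codisjoint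
  have hrange_step : ∀ n : ℕ,
      LinearMap.range (J ^ n) = LinearMap.range (J ^ (n + 1)) ⊔ H₀.map (J ^ n) := by
    intro n
    have h1 : LinearMap.range (J ^ n) = Submodule.map (J ^ n) ⊤ := (Submodule.map_top _).symm
    rw [h1, ← hsup_eq, Submodule.map_sup]
    congr 1
    rw [← LinearMap.range_comp, ← Module.End.mul_eq_comp, ← pow_succ]
  -- iSup = ⊤
  have hD : ∀ m, m ≤ r + 1 → LinearMap.range (J ^ (r + 1 - m)) ≤
      ⨆ k : Fin (r + 1), H₀.map (J ^ (k : ℕ)) := by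
    intro m
    induction m with
    | zero =>
      intro _
      rw [Nat.sub_zero, hnil, LinearMap.range_zero]
      exact bot_le
    | succ m ih =>
      intro hm
      have hih := ih (by omega)
      have hn : r + 1 - m = (r + 1 - (m + 1)) + 1 := by omega
      rw [hrange_step]
      apply sup_le
      · rw [← hn]; exact hih
      · exact le_iSup (fun k : Fin (r + 1) => H₀.map (J ^ (k : ℕ)))
          ⟨r + 1 - (m + 1), by omega⟩
  have hSt : (⨆ k : Fin (r + 1), H₀.map (J ^ (k : ℕ))) = ⊤ := by
    have h := hD (r + 1) le_rfl
    rw [Nat.sub_self, pow_zero] at h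
    rw [Module.End.one_eq_id, LinearMap.range_id] at h
    exact top_unique h
  -- independence
  have hindep : iSupIndep (fun k : Fin (r + 1) => H₀.map (J ^ (k : ℕ))) := by
    intro i
    rw [Submodule.disjoint_def]
    intro x hxi hxsup
    obtain ⟨f, hf, hfx⟩ := (Submodule.mem_iSup_iff_exists_finsupp _ x).mp hxsup
    have hfj : ∀ j : Fin (r + 1), j ≠ i → f j ∈ H₀.map (J ^ (j : ℕ)) := by
      intro j hj
      have := hf j
      rwa [iSup_pos hj] at this
    have hfi : f i = 0 := by
      have := hf i
      rw [iSup_neg (by simp)] at this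
      simpa using this
    have hxsum : ∑ j, f j = x := by
      rw [← hfx, Finsupp.sum_fintype]
      intro _; rfl
    set s : Fin (r + 1) → V := fun j => if j = i then -x else f j with hs
    have hsmem : ∀ j : Fin (r + 1), s j ∈ H₀.map (J ^ (j : ℕ)) := by
      intro j
      by_cases hji : j = i
      · subst hji
        simp only [hs, if_pos rfl]
        exact neg_mem hxi
      · simp only [hs, if_neg hji]
        exact hfj j hji
    have hssum : ∑ j, s j = 0 := by
      have hcongr : ∑ j, s j = ∑ j, ((if j = i then -x - f j else 0) + f j) := by
        apply Finset.sum_congr rfl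
        intro j _
        by_cases hji : j = i <;> simp [hs, hji]
      rw [hcongr, Finset.sum_add_distrib, Finset.sum_ite_eq' Finset.univ i, hxsum]
      simp [hfi]
    have := hzero s hsmem hssum i
    simp only [hs, if_pos rfl, neg_eq_zero] at this
    exact this
  refine ⟨hinj, ?_, ?_⟩
  · rw [DirectSum.isInternal_submodule_iff_iSupIndep_and_iSup_eq_top]
    exact ⟨hindep, hSt⟩
  · have hk : LinearMap.ker J = LinearMap.range (J ^ r) := by
      have h := hker 1 le_rfl hr
      simpa using h
    rw [hk, hrange_step r, hnil, LinearMap.range_zero, bot_sup_eq]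
end

section
/- Let V be a finite-dimensional real vector space, r ≥ 1, and J : V →ₗ[ℝ] V a linear endomorphism such that J^{r+1} = 0 and ker(J^k) = range(J^{r+1−k}) for every k with 1 ≤ k ≤ r. Let H be a subspace of V complementary to ker J (i.e. IsCompl (ker J) H), and let W ⊆ V* be the annihilator of H (Submodule.dualAnnihilator H). Then the subspaces W, J*(W), (J*)²(W), …, (J*)^r(W) of the dual space V*, where J* = J.dualMap, form an internal direct sum decomposition of V*: V* = W ⊕ J*(W) ⊕ ⋯ ⊕ (J*)^r(W); moreover (J*)^r(W) equals the annihilator of range J. -/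
open Module LinearMap

private lemma rtd_sum_vanish {E : Type*} [AddCommGroup E] [Module ℝ E]
    (r : ℕ) (T : E →ₗ[ℝ] E) (hT : T ^ (r + 1) = 0)
    (hk : LinearMap.ker (T ^ r) ≤ LinearMap.range T)
    (W : Submodule ℝ E) (hd : Disjoint (LinearMap.range T) W)
    (v : Fin (r + 1) → E) (hv : ∀ k : Fin (r + 1), v k ∈ W.map (T ^ (k : ℕ)))
    (hsum : ∑ k, v k = 0) : ∀ i, v i = 0 := by
  suffices h : ∀ n : ℕ, ∀ i : Fin (r + 1), (i : ℕ) = n → v i = 0 by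
    intro i; exact h i i rfl
  intro n
  induction n using Nat.strong_induction_on with
  | _ n ih =>
    intro i hi
    obtain ⟨w, hwW, hw⟩ := hv i
    have h2 : ∑ k, (T ^ (r - (i : ℕ))) (v k) = 0 := by
      rw [← map_sum, hsum, map_zero]
    have h3 : ∀ k : Fin (r + 1), k ∈ Finset.univ → k ≠ i →
        (T ^ (r - (i : ℕ))) (v k) = 0 := by
      intro k _ hki
      rcases lt_or_gt_of_ne (fun h => hki (Fin.ext h) : (k : ℕ) ≠ (i : ℕ)) with hlt | hgt
      · rw [ih k (by omega) k rfl, map_zero]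
      · obtain ⟨w', _, hw'⟩ := hv k
        have hexp : (r - (i : ℕ)) + (k : ℕ) =
            (r + 1) + ((r - (i : ℕ)) + (k : ℕ) - (r + 1)) := by
          have := i.isLt; omega
        rw [← hw', ← Module.End.mul_apply, ← pow_add, hexp, pow_add, hT, zero_mul,
          LinearMap.zero_apply]
    rw [Finset.sum_eq_single_of_mem i (Finset.mem_univ i) h3] at h2
    have hTr : (T ^ r) w = 0 := by
      have hexp : (r - (i : ℕ)) + (i : ℕ) = r := by
        have := i.isLt; omega
      rw [← hexp, pow_add, Module.End.mul_apply, hw, h2]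
    have hw0 : w = 0 := (Submodule.disjoint_def.mp hd) w (hk hTr) hwW
    rw [← hw, hw0, map_zero]

private lemma rtd_span_top {E : Type*} [AddCommGroup E] [Module ℝ E]
    (r : ℕ) (T : E →ₗ[ℝ] E) (hT : T ^ (r + 1) = 0) (W : Submodule ℝ E)
    (htop : LinearMap.range T ⊔ W = ⊤) :
    (⨆ k : Fin (r + 1), W.map (T ^ (k : ℕ))) = ⊤ := by
  have key : ∀ j : ℕ, LinearMap.range (T ^ (r + 1 - j)) ≤
      ⨆ k : Fin (r + 1), W.map (T ^ (k : ℕ)) := by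
    intro j
    induction j with
    | zero => simp [hT]
    | succ j ih =>
      by_cases hj : j ≤ r
      · have hm : r + 1 - (j + 1) = r - j := by omega
        have hm2 : r + 1 - j = (r - j) + 1 := by omega
        rw [hm]
        rw [hm2] at ih
        rintro x ⟨y, rfl⟩
        obtain ⟨a, ha, b, hb, rfl⟩ := Submodule.mem_sup.mp
          (show y ∈ LinearMap.range T ⊔ W by rw [htop]; exact Submodule.mem_top)
        obtain ⟨u, rfl⟩ := ha
        rw [map_add]
        refine Submodule.add_mem _ ?_ ?_
        · have : (T ^ (r - j)) (T u) = (T ^ ((r - j) + 1)) u := by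
            rw [pow_succ, Module.End.mul_apply]
          rw [this]
          exact ih ⟨u, rfl⟩
        · exact le_iSup (fun k : Fin (r + 1) => W.map (T ^ (k : ℕ)))
            ⟨r - j, by omega⟩ ⟨b, hb, rfl⟩
      · have : r + 1 - (j + 1) = r + 1 - j := by omega
        rw [this]; exact ih
  have h0 := key (r + 1)
  rw [Nat.sub_self, pow_zero] at h0
  exact top_unique (le_trans (by rw [Module.End.one_eq_id, LinearMap.range_id]) h0)

/-- For an `r`-transverse structure `J` on a finite-dimensional real vector
space `V`, a complement `H` of `ker J`, and `W` the annihilator of `H` in the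
dual space: the subspaces `W, J*(W), …, (J*)^r(W)` form an internal direct sum
decomposition of the dual `V*`, and `(J*)^r(W)` is the annihilator of
`range J`. -/
theorem r_transverse_structure_dual_decomposition
    {V : Type*} [AddCommGroup V] [Module ℝ V] [FiniteDimensional ℝ V]
    (r : ℕ) (hr : 1 ≤ r) (J : V →ₗ[ℝ] V)
    (hnil : J ^ (r + 1) = 0)
    (hker : ∀ k, 1 ≤ k → k ≤ r → LinearMap.ker (J ^ k) = LinearMap.range (J ^ (r + 1 - k)))
    (H : Submodule ℝ V) (hH : IsCompl (LinearMap.ker J) H)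
    (W : Submodule ℝ (Module.Dual ℝ V)) (hW : W = H.dualAnnihilator) :
    DirectSum.IsInternal (fun k : Fin (r + 1) => W.map (J.dualMap ^ (k : ℕ))) ∧
      W.map (J.dualMap ^ r) = (LinearMap.range J).dualAnnihilator := by
  classical
  have hpow : ∀ n : ℕ, (J ^ n).dualMap = J.dualMap ^ n := by
    intro n
    induction n with
    | zero =>
      rw [pow_zero, pow_zero]
      rw [Module.End.one_eq_id, Module.End.one_eq_id, LinearMap.dualMap_id]
    | succ n ih =>
      rw [pow_succ, Module.End.mul_eq_comp, ← LinearMap.dualMap_comp_dualMap, ih,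
        pow_succ', Module.End.mul_eq_comp]
  have hT0 : J.dualMap ^ (r + 1) = 0 := by
    rw [← hpow, hnil]
    ext φ x
    simp
  have hrange : LinearMap.range J.dualMap = (LinearMap.ker J).dualAnnihilator :=
    LinearMap.range_dualMap_eq_dualAnnihilator_ker J
  have hcompl : IsCompl (LinearMap.range J.dualMap) W := by
    rw [hrange, hW]
    exact Subspace.isCompl_dualAnnihilator hH
  have h1 : LinearMap.ker J = LinearMap.range (J ^ r) := by
    simpa using hker 1 le_rfl hr
  have hkr : LinearMap.ker (J.dualMap ^ r) ≤ LinearMap.range J.dualMap := by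
    rw [← hpow r, LinearMap.ker_dualMap_eq_dualAnnihilator_range, hrange, h1]
  have hsup : (⨆ k : Fin (r + 1), W.map (J.dualMap ^ (k : ℕ))) = ⊤ :=
    rtd_span_top r J.dualMap hT0 W hcompl.sup_eq_top
  have hind : iSupIndep (fun k : Fin (r + 1) => W.map (J.dualMap ^ (k : ℕ))) := by
    rw [iSupIndep_iff_dfinsupp_lsum_injective]
    have hLs : ∀ f : Π₀ i : Fin (r + 1), ↥(Submodule.map (J.dualMap ^ (i : ℕ)) W),
        (DFinsupp.lsum ℕ
            (fun i : Fin (r + 1) => (Submodule.map (J.dualMap ^ (i : ℕ)) W).subtype)) f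
          = ∑ k, ((f k : Module.Dual ℝ V)) := by
      intro f
      simp only [DFinsupp.lsum_apply_apply, DFinsupp.sumAddHom_apply,
        LinearMap.toAddMonoidHom_coe, Submodule.coe_subtype]
      rw [DFinsupp.sum_eq_sum_fintype _ (fun i => rfl)]
      simp [DFinsupp.equivFunOnFintype_apply]
    intro f g hfg
    rw [hLs, hLs] at hfg
    have hsum0 : ∑ k, ((f k : Module.Dual ℝ V) - (g k : Module.Dual ℝ V)) = 0 := by
      rw [Finset.sum_sub_distrib, hfg, sub_self]
    have hvan := rtd_sum_vanish r J.dualMap hT0 hkr W hcompl.disjoint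
      (fun k => (f k : Module.Dual ℝ V) - (g k : Module.Dual ℝ V))
      (fun k => Submodule.sub_mem _ (f k).2 (g k).2) hsum0
    exact DFinsupp.ext fun i => Subtype.ext (sub_eq_zero.mp (hvan i))
  constructor
  · exact DirectSum.isInternal_submodule_of_iSupIndep_of_iSup_eq_top hind hsup
  · have hkerr : LinearMap.ker (J ^ r) = LinearMap.range J := by
      have h := hker r hr le_rfl
      rw [h]
      have : r + 1 - r = 1 := by omega
      rw [this, pow_one]
    have hrTr : LinearMap.range (J.dualMap ^ r) = (LinearMap.range J).dualAnnihilator := by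
      rw [← hpow r, LinearMap.range_dualMap_eq_dualAnnihilator_ker, hkerr]
    rw [← hrTr]
    apply le_antisymm
    · rintro x ⟨w, hwW, rfl⟩
      exact ⟨w, rfl⟩
    · rw [LinearMap.range_eq_map, ← hsup, Submodule.map_iSup]
      apply iSup_le
      intro k
      rw [← Submodule.map_comp, ← Module.End.mul_eq_comp, ← pow_add]
      rcases Nat.eq_zero_or_pos (k : ℕ) with hk0 | hkpos
      · rw [hk0, Nat.add_zero]
      · have hexp : r + (k : ℕ) = (r + 1) + ((k : ℕ) - 1) := by omega
        rw [hexp, pow_add, hT0, zero_mul]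
        rw [Submodule.map_zero]
        exact bot_le
end

section
/- Let V be a finite-dimensional real vector space, r ≥ 1, and J : V →ₗ[ℝ] V a linear endomorphism such that J^{r+1} = 0 and ker(J^k) = range(J^{r+1−k}) for every k with 1 ≤ k ≤ r. Let H be a subspace of V complementary to ker J (IsCompl (ker J) H) and let W ⊆ V* be the annihilator of H. Define H₀ := { v ∈ V : ξ(J^k v) = 0 for all ξ ∈ W and all k with 0 ≤ k ≤ r−1 }. Then H₀ is a subspace of V complementary to range J, i.e. IsCompl (range J) H₀. In particular, every splitting of V by a complement of ker J canonically induces a splitting of V by a complement of range J. -/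
/-!
Let `S j = powComapInf J H j r` be the space of vectors `v` with `J ^ k v ∈ H` for all `j ≤ k < r`;
since `W` cuts out `H`, `H₀ = S 0`.

Disjointness: if `v ∈ range J ∩ S 0`, decreasing induction on `m` gives `J ^ m v = 0`. Indeed, once
`v ∈ ker J ^ (m + 1) = range J ^ (r - m)`, the vector `J ^ m v` lies in `range J ^ r = ker J` and in
`H`, hence vanishes; at `m = 0` this is `v = 0`.

Codisjointness: `range J + S j = V` by decreasing induction on `j`, starting from `S r = V`. Given
`v ∈ S (j + 1)`, split `J ^ j v = J ^ r w + h` along `ker J ⊕ H`; then `u = J ^ (r - j) w ∈ range J`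
corrects the `j`-th condition, `J ^ j (v - u) = h`, without disturbing the higher ones, because
`J ^ k u = 0` for `k > j`.
-/

open Module LinearMap

namespace LinearMap

variable {R M : Type*} [Ring R] [AddCommGroup M] [Module R M]

theorem pow_apply_pow_apply (J : M →ₗ[R] M) (a b : ℕ) (w : M) :
    (J ^ a) ((J ^ b) w) = (J ^ (a + b)) w := by
  rw [pow_add, End.mul_apply]

theorem pow_apply_mem_range_pow {J : M →ₗ[R] M} {b : ℕ} {v : M} (hv : v ∈ range (J ^ b))
    (a : ℕ) : (J ^ a) v ∈ range (J ^ (a + b)) := by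
  obtain ⟨w, rfl⟩ := hv
  exact ⟨w, (pow_apply_pow_apply J a b w).symm⟩

def powComapInf (J : M →ₗ[R] M) (H : Submodule R M) (j r : ℕ) : Submodule R M :=
  ⨅ k ∈ Set.Ico j r, H.comap (J ^ k)

variable {J : M →ₗ[R] M} {H : Submodule R M} {r : ℕ}

theorem mem_powComapInf {j : ℕ} {v : M} :
    v ∈ powComapInf J H j r ↔ ∀ k, j ≤ k → k < r → (J ^ k) v ∈ H := by
  simp [powComapInf, Submodule.mem_iInf, and_imp]

theorem powComapInf_self : powComapInf J H r r = ⊤ :=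
  eq_top_iff.mpr fun _ _ ↦ mem_powComapInf.mpr fun _ h₁ h₂ ↦ absurd h₂ (not_lt.mpr h₁)

theorem powComapInf_le_succ (j : ℕ) : powComapInf J H j r ≤ powComapInf J H (j + 1) r :=
  fun _ hv ↦ mem_powComapInf.mpr fun k hk hkr ↦ mem_powComapInf.mp hv k (by omega) hkr

theorem disjoint_range_powComapInf_zero (hr : 1 ≤ r)
    (hker : ∀ k, 1 ≤ k → k ≤ r → ker (J ^ k) = range (J ^ (r + 1 - k)))
    (hH : Disjoint (ker J) H) : Disjoint (range J) (powComapInf J H 0 r) := by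
  suffices h : ∀ m ≤ r, range J ⊓ powComapInf J H m r ≤ ker (J ^ m) by
    simpa [disjoint_iff_inf_le, Module.End.one_eq_id] using h 0 (Nat.zero_le r)
  have hker_one : ker J = range (J ^ r) := by simpa using hker 1 le_rfl hr
  intro m hm
  induction hm using Nat.decreasingInduction with
  | self => simp [hker r hr le_rfl]
  | of_succ m hmr ih =>
    rintro v ⟨hvJ, hvS⟩
    have hv : v ∈ range (J ^ (r - m)) := by
      simpa [hker (m + 1) (by omega) hmr] using ih ⟨hvJ, powComapInf_le_succ m hvS⟩
    have hJmv_ker : (J ^ m) v ∈ ker J := by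
      simpa [hker_one, Nat.add_sub_cancel' hmr.le] using pow_apply_mem_range_pow hv m
    exact Submodule.disjoint_def.mp hH _ hJmv_ker (mem_powComapInf.mp hvS m le_rfl hmr)

theorem powComapInf_succ_le_range_sup (hnil : J ^ (r + 1) = 0) (hker : ker J ≤ range (J ^ r))
    (hH : Codisjoint (ker J) H) {j : ℕ} (hjr : j < r) :
    powComapInf J H (j + 1) r ≤ range J ⊔ powComapInf J H j r := by
  intro v hv
  obtain ⟨a, ha, h, hh, hah⟩ :=
    Submodule.mem_sup.mp (hH.eq_top ▸ Submodule.mem_top : (J ^ j) v ∈ ker J ⊔ H)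
  obtain ⟨w, rfl⟩ := hker ha
  have hu : (J ^ (r - j)) w ∈ range J := by
    rw [show r - j = 1 + (r - j - 1) by omega, ← pow_apply_pow_apply, pow_one]
    exact mem_range_self J _
  have hJu : ∀ k, j < k → (J ^ k) ((J ^ (r - j)) w) = 0 := fun k hk ↦ by
    rw [pow_apply_pow_apply, show k + (r - j) = k - j - 1 + (r + 1) by omega,
      ← pow_apply_pow_apply, hnil, zero_apply, map_zero]
  refine Submodule.mem_sup.mpr ⟨_, hu, v - (J ^ (r - j)) w, ?_, add_sub_cancel _ _⟩
  refine mem_powComapInf.mpr fun k hjk hkr ↦ ?_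
  rcases hjk.eq_or_lt with rfl | hjk
  · rwa [map_sub, pow_apply_pow_apply, Nat.add_sub_cancel' hjr.le, ← hah, add_sub_cancel_left]
  · rw [map_sub, hJu k hjk, sub_zero]
    exact mem_powComapInf.mp hv k hjk hkr

theorem codisjoint_range_powComapInf_zero (hnil : J ^ (r + 1) = 0)
    (hker : ker J ≤ range (J ^ r)) (hH : Codisjoint (ker J) H) :
    Codisjoint (range J) (powComapInf J H 0 r) := by
  suffices h : ∀ j ≤ r, range J ⊔ powComapInf J H j r = ⊤ from
    codisjoint_iff.mpr (h 0 (Nat.zero_le r))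
  intro j hj
  induction hj using Nat.decreasingInduction with
  | self => simp [powComapInf_self]
  | of_succ j hjr ih =>
    refine eq_top_iff.mpr ?_
    calc ⊤ = range J ⊔ powComapInf J H (j + 1) r := ih.symm
      _ ≤ range J ⊔ (range J ⊔ powComapInf J H j r) :=
        sup_le_sup_left (powComapInf_succ_le_range_sup hnil hker hH hjr) _
      _ = range J ⊔ powComapInf J H j r := by rw [← sup_assoc, sup_idem]

end LinearMap

theorem Subspace.mem_powComapInf_iff_forall_dualAnnihilator {K V : Type*} [Field K]
    [AddCommGroup V] [Module K V] {J : V →ₗ[K] V} {H : Subspace K V} {r : ℕ} {v : V} :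
    v ∈ powComapInf J H 0 r ↔ ∀ ξ ∈ H.dualAnnihilator, ∀ k, k < r → ξ ((J ^ k) v) = 0 := by
  simp only [mem_powComapInf, zero_le, true_implies,
    ← Subspace.forall_mem_dualAnnihilator_apply_eq_zero_iff H]
  exact ⟨fun h ξ hξ k hk ↦ h k hk ξ hξ, fun h k hk ξ hξ ↦ h ξ hξ k hk⟩

theorem r_transverse_structure_induced_connection_general
    {V : Type*} [AddCommGroup V] [Module ℝ V]
    (r : ℕ) (hr : 1 ≤ r) (J : V →ₗ[ℝ] V)
    (hnil : J ^ (r + 1) = 0)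
    (hker : ∀ k, 1 ≤ k → k ≤ r → LinearMap.ker (J ^ k) = LinearMap.range (J ^ (r + 1 - k)))
    (H : Submodule ℝ V) (hH : IsCompl (LinearMap.ker J) H)
    (W : Submodule ℝ (Module.Dual ℝ V)) (hW : W = H.dualAnnihilator)
    (H₀ : Submodule ℝ V)
    (hH₀ : ∀ v : V, v ∈ H₀ ↔ ∀ ξ ∈ W, ∀ k, k ≤ r - 1 → ξ ((J ^ k) v) = 0) :
    IsCompl (LinearMap.range J) H₀ := by
  have hH₀_eq : H₀ = powComapInf J H 0 r := by
    ext v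
    rw [hH₀, Subspace.mem_powComapInf_iff_forall_dualAnnihilator, hW]
    have hlt : ∀ k, k ≤ r - 1 ↔ k < r := fun k ↦ by omega
    simp only [hlt]
  have hker_one : ker J = range (J ^ r) := by simpa using hker 1 le_rfl hr
  rw [hH₀_eq]
  exact ⟨disjoint_range_powComapInf_zero hr hker hH.disjoint,
    codisjoint_range_powComapInf_zero hnil hker_one.le hH.codisjoint⟩

/-- For an `r`-transverse structure `J` on a finite-dimensional real vector
space `V`, a complement `H` of `ker J` and `W` the annihilator of `H`: the
subspace `H₀ = {v | ξ (J^k v) = 0 for all ξ ∈ W, 0 ≤ k ≤ r-1}` is a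
complement of `range J`. Thus every splitting of `V` by a complement of
`ker J` canonically induces a splitting of `V` by a complement of `range J`. -/
theorem r_transverse_structure_induced_connection
    {V : Type*} [AddCommGroup V] [Module ℝ V] [FiniteDimensional ℝ V]
    (r : ℕ) (hr : 1 ≤ r) (J : V →ₗ[ℝ] V)
    (hnil : J ^ (r + 1) = 0)
    (hker : ∀ k, 1 ≤ k → k ≤ r → LinearMap.ker (J ^ k) = LinearMap.range (J ^ (r + 1 - k)))
    (H : Submodule ℝ V) (hH : IsCompl (LinearMap.ker J) H)
    (W : Submodule ℝ (Module.Dual ℝ V)) (hW : W = H.dualAnnihilator)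
    (H₀ : Submodule ℝ V)
    (hH₀ : ∀ v : V, v ∈ H₀ ↔ ∀ ξ ∈ W, ∀ k, k ≤ r - 1 → ξ ((J ^ k) v) = 0) :
    IsCompl (LinearMap.range J) H₀ :=
  r_transverse_structure_induced_connection_general r hr J hnil hker H hH W hW H₀ hH₀
end

section
/- Let V be a finite-dimensional real vector space, r ≥ 1, and J : V →ₗ[ℝ] V a linear endomorphism such that J^{r+1} = 0 and ker(J^k) = range(J^{r+1−k}) for every k with 1 ≤ k ≤ r. Let H₀ be a subspace of V with IsCompl (range J) H₀, and let g be a positive-definite symmetric bilinear form (an inner product) on H₀. Then there exists a positive-definite symmetric bilinear form G on V such that (i) the subspaces H_k := J^k(H₀), 0 ≤ k ≤ r, are pairwise G-orthogonal, and (ii) G(J^k x, J^k y) = g(x, y) for all x, y ∈ H₀ and all 0 ≤ k ≤ r, i.e. each J^k : H₀ → H_k is an isometry onto its image. -/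
/-!
The map `(x₀, …, x_r) ↦ ∑ J^k x_k` from `H₀^(r+1)` to `V` is a linear isomorphism. It is onto
because `V = range J ⊔ H₀` gives `range J^m = range J^(m+1) ⊔ J^m(H₀)`, and `range J^(r+1) = 0`.
It is one-to-one because applying `J^(r-j)` to a relation whose first nonzero component is `x_j`
puts `x_j` in `ker J^r ⊓ H₀ = range J ⊓ H₀ = 0`. Transporting the orthogonal sum of `r + 1`
copies of `g` along this isomorphism gives `G`.
-/

open Module LinearMap

namespace Module.End

variable {R M : Type*} [Ring R] [AddCommGroup M] [Module R M]

def powSum (J : Module.End R M) (H : Submodule R M) (n : ℕ) : (Fin n → H) →ₗ[R] M :=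
  ∑ k : Fin n, (J ^ (k : ℕ)) ∘ₗ H.subtype ∘ₗ proj k

variable {J : Module.End R M} {H : Submodule R M} {r : ℕ}

theorem powSum_apply {n : ℕ} (x : Fin n → H) :
    powSum J H n x = ∑ k : Fin n, (J ^ (k : ℕ)) (x k : M) := by
  simp [powSum]

theorem powSum_single {n : ℕ} (k : Fin n) (x : H) :
    powSum J H n (Pi.single k x) = (J ^ (k : ℕ)) (x : M) := by
  rw [powSum_apply, Finset.sum_eq_single k (fun j _ hj => by simp [hj]) (by simp)]
  simp

-- The terms of index `> j` are killed because `J ^ (r + 1) = 0`.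
theorem pow_sub_powSum_of_forall_lt (hnil : J ^ (r + 1) = 0) (x : Fin (r + 1) → H)
    (j : Fin (r + 1)) (hx : ∀ k < j, x k = 0) :
    (J ^ (r - j)) (powSum J H (r + 1) x) = (J ^ r) (x j : M) := by
  rw [powSum_apply, map_sum, Finset.sum_eq_single j]
  · rw [← Module.End.mul_apply, ← pow_add, Nat.sub_add_cancel (Nat.lt_succ_iff.mp j.2)]
  · intro k _ hkj
    rcases lt_or_gt_of_ne hkj with hlt | hgt
    · simp [hx k hlt]
    · rw [← Module.End.mul_apply, ← pow_add, pow_eq_zero_of_le (by omega) hnil,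
        LinearMap.zero_apply]
  · simp

theorem powSum_injective (hnil : J ^ (r + 1) = 0) (hdisj : Disjoint (ker (J ^ r)) H) :
    Function.Injective (powSum J H (r + 1)) := by
  rw [injective_iff_map_eq_zero]
  intro x hx
  funext j
  induction j using WellFoundedLT.induction with
  | _ j ih =>
    have hker : (x j : M) ∈ ker (J ^ r) := by
      rw [mem_ker, ← pow_sub_powSum_of_forall_lt hnil x j ih, hx, map_zero]
    exact Subtype.ext (Submodule.disjoint_def.mp hdisj _ hker (x j).2)

theorem range_pow_le_range_powSum (hnil : J ^ (r + 1) = 0) (hcodisj : range J ⊔ H = ⊤)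
    {m : ℕ} (hm : m ≤ r + 1) : range (J ^ m) ≤ range (powSum J H (r + 1)) := by
  induction hm using Nat.decreasingInduction with
  | self => simp [hnil]
  | of_succ m hm ih =>
    have hsplit : range (J ^ m) = range (J ^ (m + 1)) ⊔ H.map (J ^ m) := by
      rw [range_eq_map, ← hcodisj, Submodule.map_sup, ← range_comp, ← Module.End.mul_eq_comp,
        ← pow_succ]
    rw [hsplit, sup_le_iff]
    refine ⟨ih, ?_⟩
    rintro _ ⟨h, hh, rfl⟩
    exact ⟨Pi.single ⟨m, hm⟩ ⟨h, hh⟩, powSum_single _ _⟩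

theorem powSum_surjective (hnil : J ^ (r + 1) = 0) (hcodisj : range J ⊔ H = ⊤) :
    Function.Surjective (powSum J H (r + 1)) := by
  rw [← range_eq_top, eq_top_iff]
  simpa [Module.End.one_eq_id] using range_pow_le_range_powSum hnil hcodisj (Nat.zero_le _)

noncomputable def powSumEquiv (hnil : J ^ (r + 1) = 0) (hker : ker (J ^ r) ≤ range J)
    (hcompl : IsCompl (range J) H) : (Fin (r + 1) → H) ≃ₗ[R] M :=
  .ofBijective (powSum J H (r + 1))
    ⟨powSum_injective hnil (hcompl.disjoint.mono_left hker),
      powSum_surjective hnil hcompl.sup_eq_top⟩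

theorem powSumEquiv_symm_pow_apply (hnil : J ^ (r + 1) = 0) (hker : ker (J ^ r) ≤ range J)
    (hcompl : IsCompl (range J) H) (k : Fin (r + 1)) (x : H) :
    (powSumEquiv hnil hker hcompl).symm ((J ^ (k : ℕ)) x) = Pi.single k x :=
  (LinearEquiv.symm_apply_eq _).mpr (powSum_single k x).symm

end Module.End

namespace LinearMap

variable {R W : Type*} (ι : Type*) [Fintype ι]

section CommSemiring

variable [CommSemiring R] [AddCommMonoid W] [Module R W]

def piDiag (g : W →ₗ[R] W →ₗ[R] R) : (ι → W) →ₗ[R] (ι → W) →ₗ[R] R :=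
  ∑ i : ι, g.compl₁₂ (proj i) (proj i)

variable {ι} {g : W →ₗ[R] W →ₗ[R] R}

theorem piDiag_apply (x y : ι → W) : piDiag ι g x y = ∑ i, g (x i) (y i) := by
  simp [piDiag]

theorem piDiag_single_single [DecidableEq ι] (i j : ι) (x y : W) :
    piDiag ι g (Pi.single i x) (Pi.single j y) = if i = j then g x y else 0 := by
  rw [piDiag_apply, Finset.sum_eq_single i (fun k _ hk => by simp [hk]) (by simp)]
  split_ifs with h <;> simp [h]

theorem piDiag_comm (hg : ∀ x y, g x y = g y x) (x y : ι → W) :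
    piDiag ι g x y = piDiag ι g y x := by
  simp only [piDiag_apply, hg]

end CommSemiring

variable {ι}

theorem piDiag_pos [CommRing R] [PartialOrder R] [IsOrderedRing R] [AddCommGroup W] [Module R W]
    {g : W →ₗ[R] W →ₗ[R] R} (hg : ∀ x, x ≠ 0 → 0 < g x x) {x : ι → W} (hx : x ≠ 0) :
    0 < piDiag ι g x x := by
  obtain ⟨i, hi⟩ := Function.ne_iff.mp hx
  rw [piDiag_apply]
  refine Finset.sum_pos' (fun j _ => ?_) ⟨i, Finset.mem_univ i, hg _ hi⟩
  by_cases hj : x j = 0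
  · simp [hj]
  · exact (hg _ hj).le

end LinearMap

theorem r_transverse_structure_lifted_metric_general
    {V : Type*} [AddCommGroup V] [Module ℝ V]
    (r : ℕ) (hr : 1 ≤ r) (J : V →ₗ[ℝ] V)
    (hnil : J ^ (r + 1) = 0)
    (hker : ∀ k, 1 ≤ k → k ≤ r → LinearMap.ker (J ^ k) = LinearMap.range (J ^ (r + 1 - k)))
    (H₀ : Submodule ℝ V) (hH₀ : IsCompl (LinearMap.range J) H₀)
    (g : H₀ →ₗ[ℝ] H₀ →ₗ[ℝ] ℝ)
    (hgsymm : ∀ x y : H₀, g x y = g y x)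
    (hgpos : ∀ x : H₀, x ≠ 0 → 0 < g x x) :
    ∃ G : V →ₗ[ℝ] V →ₗ[ℝ] ℝ,
      (∀ u v : V, G u v = G v u) ∧
      (∀ v : V, v ≠ 0 → 0 < G v v) ∧
      (∀ k l, k ≤ r → l ≤ r → k ≠ l →
        ∀ x y : H₀, G ((J ^ k) (x : V)) ((J ^ l) (y : V)) = 0) ∧
      (∀ k, k ≤ r → ∀ x y : H₀, G ((J ^ k) (x : V)) ((J ^ k) (y : V)) = g x y) := by
  have hker_r : ker (J ^ r) ≤ range J := by simpa using (hker r hr le_rfl).le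
  set e := Module.End.powSumEquiv hnil hker_r hH₀
  have he (k : ℕ) (hk : k ≤ r) (x : H₀) : e.symm ((J ^ k) x) = Pi.single ⟨k, by omega⟩ x :=
    Module.End.powSumEquiv_symm_pow_apply hnil hker_r hH₀ ⟨k, by omega⟩ x
  refine ⟨(piDiag (Fin (r + 1)) g).compl₁₂ e.symm.toLinearMap e.symm.toLinearMap,
    fun u v => piDiag_comm hgsymm _ _, fun v hv => piDiag_pos hgpos (by simpa using hv), ?_, ?_⟩
  · intro k l hk hl hkl x y
    simp [he k hk, he l hl, piDiag_single_single, hkl]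
  · intro k hk x y
    simp [he k hk, piDiag_single_single]

/-- For an `r`-transverse structure `J` on a finite-dimensional real vector
space `V`, a complement `H₀` of `range J`, and an inner product `g` on `H₀`
(a positive-definite symmetric bilinear form), there is a positive-definite
symmetric bilinear form `G` on `V` such that the subspaces
`H_k = J^k(H₀)` (`0 ≤ k ≤ r`) are pairwise `G`-orthogonal and each
`J^k : H₀ → H_k` is an isometry, i.e. `G (J^k x) (J^k y) = g x y`. -/
theorem r_transverse_structure_lifted_metric
    {V : Type*} [AddCommGroup V] [Module ℝ V] [FiniteDimensional ℝ V]
    (r : ℕ) (hr : 1 ≤ r) (J : V →ₗ[ℝ] V)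
    (hnil : J ^ (r + 1) = 0)
    (hker : ∀ k, 1 ≤ k → k ≤ r → LinearMap.ker (J ^ k) = LinearMap.range (J ^ (r + 1 - k)))
    (H₀ : Submodule ℝ V) (hH₀ : IsCompl (LinearMap.range J) H₀)
    (g : H₀ →ₗ[ℝ] H₀ →ₗ[ℝ] ℝ)
    (hgsymm : ∀ x y : H₀, g x y = g y x)
    (hgpos : ∀ x : H₀, x ≠ 0 → 0 < g x x) :
    ∃ G : V →ₗ[ℝ] V →ₗ[ℝ] ℝ,
      (∀ u v : V, G u v = G v u) ∧
      (∀ v : V, v ≠ 0 → 0 < G v v) ∧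
      (∀ k l, k ≤ r → l ≤ r → k ≠ l →
        ∀ x y : H₀, G ((J ^ k) (x : V)) ((J ^ l) (y : V)) = 0) ∧
      (∀ k, k ≤ r → ∀ x y : H₀, G ((J ^ k) (x : V)) ((J ^ k) (y : V)) = g x y) :=
  r_transverse_structure_lifted_metric_general r hr J hnil hker H₀ hH₀ g hgsymm hgpos
end
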